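/- arXiv:1605.00879 — 3 statements merged into one kernel-verified Lean document; each statement's English description precedes it below -/
import Mathlib

section
/- For every finitely supported u ∈ ℓ²(ℤ^d), one has i(Δ(A₀u) − A₀(Δu)) = Σ_{i=1}^d Δ_i(4 − Δ_i)u, where Δ_i is the Laplacian in the i-th coordinate, (Δ_i u)(n) := 2u(n) − u(n−e_i) − u(n+e_i). In particular, the commutator form [Δ, iA₀], defined on finitely supported sequences, extends to the bounded self-adjoint operator Σ_{i=1}^d Δ_i(4 − Δ_i). (For d = 1 this reads [Δ, iA₀] = Δ(4 − Δ).) -/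
/-!
Write `Δ = ∑ i, Δ_i` and `A₀ = I • ∑ j, a_j`, where `a_j = ½(S_j* + S_j) − (S_j* − S_j)N_j` acts
in the `j`-th coordinate only. For `i ≠ j` the operators `Δ_i` and `a_j` act on different
coordinates and commute, so `I(ΔA₀ − A₀Δ) = ∑ i, (a_i Δ_i − Δ_i a_i)`, and a one-dimensional
computation gives `a_i Δ_i − Δ_i a_i = 2 − S_i² − S_i*² = Δ_i(4 − Δ_i)`. On `ℓ²(ℤ^d)` the
translation `S_i*²` is unitary with adjoint `S_i²`, so `∑ i, (2 − (S_i*² + (S_i*²)*))` is bounded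
and self-adjoint.
-/

noncomputable section

open scoped ENNReal

/-- The Hilbert space ℓ²(ℤ^d). -/
abbrev l2Zd (d : ℕ) : Type := lp (fun _ : Fin d → ℤ => ℂ) 2

/-- The discrete Laplacian, acting on functions ℤ^d → ℂ. -/
def lapFun (d : ℕ) (u : (Fin d → ℤ) → ℂ) (n : Fin d → ℤ) : ℂ :=
  ∑ i : Fin d,
    (2 * u n - u (Function.update n i (n i + 1)) - u (Function.update n i (n i - 1)))

/-- The Laplacian in the i-th coordinate: (Δ_i u)(n) = 2u(n) − u(n−e_i) − u(n+e_i). -/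
def lapIFun (d : ℕ) (i : Fin d) (u : (Fin d → ℤ) → ℂ) (n : Fin d → ℤ) : ℂ :=
  2 * u n - u (Function.update n i (n i + 1)) - u (Function.update n i (n i - 1))

/-- The generator of dilations A₀ := i Σ_{i=1}^d (½(S_i*+S_i) − (S_i*−S_i)N_i), acting on
functions ℤ^d → ℂ. -/
def A0fun (d : ℕ) (u : (Fin d → ℤ) → ℂ) (n : Fin d → ℤ) : ℂ :=
  Complex.I * ∑ i : Fin d,
    ((u (Function.update n i (n i + 1)) + u (Function.update n i (n i - 1))) / 2 -
      (((n i : ℂ) + 1) * u (Function.update n i (n i + 1)) -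
        ((n i : ℂ) - 1) * u (Function.update n i (n i - 1))))

section Reindex

variable {ι κ 𝕜 E : Type*} [NormedAddCommGroup E] {p : ℝ≥0∞}

theorem Memℓp.comp_equiv {f : ι → E} (hf : Memℓp f p) (e : κ ≃ ι) : Memℓp (f ∘ e) p := by
  rcases p.trichotomy with rfl | rfl | hp
  · rw [memℓp_zero_iff] at hf ⊢
    exact hf.preimage e.injective.injOn
  · rw [memℓp_infty_iff] at hf ⊢
    exact hf.mono (Set.range_comp_subset_range e fun i => ‖f i‖)
  · rw [memℓp_gen_iff hp] at hf ⊢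
    exact e.summable_iff.2 hf

theorem lp.norm_comp_equiv [Fact (1 ≤ p)] (f : lp (fun _ : ι => E) p) (e : κ ≃ ι) :
    ‖(⟨f ∘ e, (lp.memℓp f).comp_equiv e⟩ : lp (fun _ : κ => E) p)‖ = ‖f‖ := by
  rcases eq_or_ne p ∞ with rfl | hp
  · rw [lp.norm_eq_ciSup, lp.norm_eq_ciSup]
    exact e.iSup_comp (g := fun i => ‖f i‖)
  · have hp' : 0 < p.toReal := ENNReal.toReal_pos (zero_lt_one.trans_le Fact.out).ne' hp
    rw [lp.norm_eq_tsum_rpow hp', lp.norm_eq_tsum_rpow hp']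
    exact congrArg (· ^ (1 / p.toReal)) (e.tsum_eq fun i => ‖f i‖ ^ p.toReal)

variable [NormedField 𝕜] [NormedSpace 𝕜 E] [Fact (1 ≤ p)]

variable (𝕜 E p) in
def lp.compEquiv (e : κ ≃ ι) : lp (fun _ : ι => E) p ≃ₗᵢ[𝕜] lp (fun _ : κ => E) p where
  toFun f := ⟨f ∘ e, (lp.memℓp f).comp_equiv e⟩
  invFun f := ⟨f ∘ e.symm, (lp.memℓp f).comp_equiv e.symm⟩
  map_add' _ _ := rfl
  map_smul' _ _ := rfl
  left_inv f := lp.ext <| funext fun i => congrArg f (e.apply_symm_apply i)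
  right_inv f := lp.ext <| funext fun i => congrArg f (e.symm_apply_apply i)
  norm_map' f := lp.norm_comp_equiv f e

theorem lp.compEquiv_apply (e : κ ≃ ι) (f : lp (fun _ : ι => E) p) (k : κ) :
    lp.compEquiv 𝕜 E p e f k = f (e k) := rfl

theorem lp.compEquiv_symm_apply (e : κ ≃ ι) (f : lp (fun _ : κ => E) p) (i : ι) :
    (lp.compEquiv 𝕜 E p e).symm f i = f (e.symm i) := rfl

end Reindex

theorem Function.update_add_eq_add_single {ι M : Type*} [DecidableEq ι] [AddMonoid M]
    (f : ι → M) (i : ι) (k : M) : Function.update f i (f i + k) = f + Pi.single i k := by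
  ext j
  rcases eq_or_ne j i with rfl | h
  · simp
  · simp [h]

theorem Function.update_sub_eq_sub_single {ι G : Type*} [DecidableEq ι] [AddGroup G]
    (f : ι → G) (i : ι) (k : G) : Function.update f i (f i - k) = f - Pi.single i k := by
  rw [sub_eq_add_neg, update_add_eq_add_single, Pi.single_neg, sub_eq_add_neg]

section Commutator

open Function Complex

variable {d : ℕ}

def dilIFun (d : ℕ) (j : Fin d) (u : (Fin d → ℤ) → ℂ) (n : Fin d → ℤ) : ℂ :=
  (u (update n j (n j + 1)) + u (update n j (n j - 1))) / 2 -
    (((n j : ℂ) + 1) * u (update n j (n j + 1)) - ((n j : ℂ) - 1) * u (update n j (n j - 1)))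

theorem lapFun_eq_sum (u : (Fin d → ℤ) → ℂ) :
    lapFun d u = fun n => ∑ i, lapIFun d i u n := rfl

theorem A0fun_eq_mul_sum (u : (Fin d → ℤ) → ℂ) :
    A0fun d u = fun n => I * ∑ j, dilIFun d j u n := rfl

theorem lapIFun_mul_sum (i : Fin d) (c : ℂ) (f : Fin d → (Fin d → ℤ) → ℂ) (n : Fin d → ℤ) :
    lapIFun d i (fun m => c * ∑ j, f j m) n = c * ∑ j, lapIFun d i (f j) n := by
  simp only [lapIFun, Finset.mul_sum, ← Finset.sum_sub_distrib]
  exact Finset.sum_congr rfl fun j _ => by ring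

theorem dilIFun_sum (j : Fin d) (f : Fin d → (Fin d → ℤ) → ℂ) (n : Fin d → ℤ) :
    dilIFun d j (fun m => ∑ i, f i m) n = ∑ i, dilIFun d j (f i) n := by
  simp only [dilIFun, Finset.mul_sum, Finset.sum_div, ← Finset.sum_add_distrib,
    ← Finset.sum_sub_distrib]

theorem lapIFun_dilIFun_of_ne {i j : Fin d} (hij : i ≠ j) (u : (Fin d → ℤ) → ℂ)
    (n : Fin d → ℤ) : lapIFun d i (dilIFun d j u) n = dilIFun d j (lapIFun d i u) n := by
  simp only [lapIFun, dilIFun, update_of_ne hij, update_of_ne hij.symm, update_comm hij]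
  ring

theorem dilIFun_lapIFun_sub_lapIFun_dilIFun (i : Fin d) (u : (Fin d → ℤ) → ℂ)
    (n : Fin d → ℤ) :
    dilIFun d i (lapIFun d i u) n - lapIFun d i (dilIFun d i u) n =
      2 * u n - u (update n i (n i + 2)) - u (update n i (n i - 2)) := by
  simp only [lapIFun, dilIFun, update_self, update_idem, add_assoc, sub_sub, add_sub_cancel_right,
    sub_add_cancel, Int.reduceAdd, update_eq_self]
  push_cast
  ring

theorem lapIFun_four_sub_lapIFun (i : Fin d) (u : (Fin d → ℤ) → ℂ) (n : Fin d → ℤ) :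
    lapIFun d i (fun m => 4 * u m - lapIFun d i u m) n =
      2 * u n - u (update n i (n i + 2)) - u (update n i (n i - 2)) := by
  simp only [lapIFun, update_self, update_idem, add_assoc, sub_sub, add_sub_cancel_right,
    sub_add_cancel, Int.reduceAdd, update_eq_self]
  ring

theorem I_mul_lapFun_A0fun_sub_A0fun_lapFun (u : (Fin d → ℤ) → ℂ) (n : Fin d → ℤ) :
    I * (lapFun d (A0fun d u) n - A0fun d (lapFun d u) n) =
      ∑ i, (2 * u n - u (update n i (n i + 2)) - u (update n i (n i - 2))) := by
  have hΔA : lapFun d (A0fun d u) n = I * ∑ i, ∑ j, lapIFun d i (dilIFun d j u) n := by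
    simp only [lapFun_eq_sum, A0fun_eq_mul_sum, lapIFun_mul_sum]
    rw [Finset.mul_sum]
  have hAΔ : A0fun d (lapFun d u) n = I * ∑ i, ∑ j, dilIFun d i (lapIFun d j u) n := by
    simp only [lapFun_eq_sum, A0fun_eq_mul_sum, dilIFun_sum]
  rw [hΔA, hAΔ, Finset.sum_comm (f := fun i j => dilIFun d i (lapIFun d j u) n), ← mul_sub,
    ← mul_assoc, I_mul_I, neg_one_mul, ← neg_sub, neg_neg, ← Finset.sum_sub_distrib]
  refine Finset.sum_congr rfl fun i _ => ?_
  rw [← Finset.sum_sub_distrib, Finset.sum_eq_single i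
    (fun j _ hji => by rw [lapIFun_dilIFun_of_ne hji.symm, sub_self]) (by simp)]
  exact dilIFun_lapIFun_sub_lapIFun_dilIFun i u n

end Commutator

namespace l2Zd

open Function

variable {d : ℕ}

def translate (d : ℕ) (v : Fin d → ℤ) : l2Zd d ≃ₗᵢ[ℂ] l2Zd d :=
  lp.compEquiv ℂ ℂ 2 (Equiv.addRight v)

theorem translate_apply (v : Fin d → ℤ) (u : l2Zd d) (n : Fin d → ℤ) :
    translate d v u n = u (n + v) := rfl

theorem translate_symm_apply (v : Fin d → ℤ) (u : l2Zd d) (n : Fin d → ℤ) :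
    (translate d v).symm u n = u (n - v) := by
  rw [sub_eq_add_neg]
  rfl

def lapA0Commutator (d : ℕ) : l2Zd d →L[ℂ] l2Zd d :=
  ∑ i : Fin d,
    (2 - ((translate d (Pi.single i 2) : l2Zd d →L[ℂ] l2Zd d) +
      star (translate d (Pi.single i 2) : l2Zd d →L[ℂ] l2Zd d)))

theorem isSelfAdjoint_lapA0Commutator (d : ℕ) : IsSelfAdjoint (lapA0Commutator d) :=
  isSelfAdjoint_sum _ fun _ _ => (IsSelfAdjoint.ofNat 2).sub (.add_star_self _)

theorem lapA0Commutator_apply (u : l2Zd d) (n : Fin d → ℤ) :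
    lapA0Commutator d u n =
      ∑ i, (2 * u n - u (update n i (n i + 2)) - u (update n i (n i - 2))) := by
  simp only [update_add_eq_add_single, update_sub_eq_sub_single, lapA0Commutator,
    LinearIsometryEquiv.star_eq_symm, sum_apply, sub_apply, add_apply,
    ContinuousLinearMap.ofNat_apply, two_smul, ContinuousLinearEquiv.coe_coe,
    LinearIsometryEquiv.coe_toContinuousLinearEquiv, lp.coeFn_sum, Finset.sum_apply, lp.coeFn_sub,
    lp.coeFn_add, Pi.sub_apply, Pi.add_apply, translate_apply, translate_symm_apply, sub_sub, two_mul]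

end l2Zd

theorem laplacian_A0_commutator_general (d : ℕ) :
    (∀ u : (Fin d → ℤ) → ℂ, (Function.support u).Finite → ∀ n : Fin d → ℤ,
      Complex.I * (lapFun d (A0fun d u) n - A0fun d (lapFun d u) n) =
        ∑ i : Fin d, lapIFun d i (fun m => 4 * u m - lapIFun d i u m) n) ∧
    ∃ B : l2Zd d →L[ℂ] l2Zd d, IsSelfAdjoint B ∧
      ∀ (u : l2Zd d) (n : Fin d → ℤ),
        (B u) n = ∑ i : Fin d, lapIFun d i (fun m => 4 * u m - lapIFun d i (⇑u) m) n := by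
  refine ⟨fun u _ n => ?_, l2Zd.lapA0Commutator d, l2Zd.isSelfAdjoint_lapA0Commutator d,
    fun u n => ?_⟩
  · simp only [I_mul_lapFun_A0fun_sub_A0fun_lapFun, lapIFun_four_sub_lapIFun]
  · simp only [l2Zd.lapA0Commutator_apply, lapIFun_four_sub_lapIFun]

/-- For finitely supported u, i(Δ(A₀u) − A₀(Δu)) = Σ_{i=1}^d Δ_i(4 − Δ_i)u;
in particular the commutator form [Δ, iA₀] extends to the bounded self-adjoint operator
Σ_{i=1}^d Δ_i(4 − Δ_i). -/
theorem laplacian_A0_commutator (d : ℕ) (hd : 1 ≤ d) :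
    (∀ u : (Fin d → ℤ) → ℂ, (Function.support u).Finite → ∀ n : Fin d → ℤ,
      Complex.I * (lapFun d (A0fun d u) n - A0fun d (lapFun d u) n) =
        ∑ i : Fin d, lapIFun d i (fun m => 4 * u m - lapIFun d i u m) n) ∧
    ∃ B : l2Zd d →L[ℂ] l2Zd d, IsSelfAdjoint B ∧
      ∀ (u : l2Zd d) (n : Fin d → ℤ),
        (B u) n = ∑ i : Fin d, lapIFun d i (fun m => 4 * u m - lapIFun d i (⇑u) m) n :=
  laplacian_A0_commutator_general d
end
end

section
/- The bounded operator B_W := Σ_{i=1}^d (U_i·W̃·(S_i*−S_i) − (S_i*−S_i)·W̃·U_i) on ℓ²(ℤ^d) is NOT a compact operator. -/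
noncomputable section

open scoped ENNReal

/-- W̃(n) = q·sin(k(n₁+…+n_d)). -/
def WvNt (d : ℕ) (q k : ℝ) (n : Fin d → ℤ) : ℝ := q * Real.sin (k * ∑ i, (n i : ℝ))

/-- U_i(n) = n_i/|n|, with U_i(0) = 0. -/
def Ufun (d : ℕ) (i : Fin d) (n : Fin d → ℤ) : ℝ :=
  if n = 0 then 0 else (n i : ℝ) / Real.sqrt (∑ j, (n j : ℝ) ^ 2)

/-- B_W = Σ_i (U_i·W̃·(S_i*−S_i) − (S_i*−S_i)·W̃·U_i), acting on functions. -/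
def BWfun (d : ℕ) (q k : ℝ) (u : (Fin d → ℤ) → ℂ) (n : Fin d → ℤ) : ℂ :=
  ∑ i : Fin d,
    ((Ufun d i n : ℂ) * (WvNt d q k n : ℂ) *
        (u (Function.update n i (n i + 1)) - u (Function.update n i (n i - 1))) -
      ((WvNt d q k (Function.update n i (n i + 1)) : ℂ) *
          (Ufun d i (Function.update n i (n i + 1)) : ℂ) * u (Function.update n i (n i + 1)) -
        (WvNt d q k (Function.update n i (n i - 1)) : ℂ) *
          (Ufun d i (Function.update n i (n i - 1)) : ℂ) * u (Function.update n i (n i - 1))))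

/-! The unit vectors `δ_b` are bounded, and
`B_W δ_b (n) = Σ_i (U_i(n) W̃(n) - U_i(b) W̃(b)) (δ_b(n + e_i) - δ_b(n - e_i))`
is supported on the neighbours of `b`. On the ray `b = s e₁`, `s ≥ 2`, one has `U₁ = 1`, so the
values at `(s ∓ 1) e₁` are `±q (sin k(s ∓ 1) - sin ks)`. With `θ = ks`, the differences
`sin (θ + k) - sin θ` and `sin θ - sin (θ - k)` have sum `2 cos θ sin k` and difference
`-2 sin θ (1 - cos k)`, so they are not both small when `k ∉ πℤ`. Hence the images of
`δ_{s e₁}`, `s ∈ 3ℕ + 2`, are uniformly separated, which no compact operator allows. -/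

open Real

theorem IsCompactOperator.not_pairwise_le_dist {𝕜 E F : Type*} [NontriviallyNormedField 𝕜]
    [SeminormedAddCommGroup E] [NormedSpace 𝕜 E] [NormedAddCommGroup F] [NormedSpace 𝕜 F]
    {T : E →ₗ[𝕜] F} (hT : IsCompactOperator T) {x : ℕ → E}
    (hx : Bornology.IsBounded (Set.range x))
    {ε : ℝ} (hε : 0 < ε) : ¬ Pairwise fun m n => ε ≤ dist (T (x m)) (T (x n)) := by
  intro hsep
  obtain ⟨K, hK, hTK⟩ := hT.image_subset_compact_of_bounded hx
  have hpre : (fun n => T (x n)) ⁻¹' K = Set.univ :=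
    Set.eq_univ_of_forall fun n => hTK ⟨x n, Set.mem_range_self n, rfl⟩
  have hcpt := (Metric.isClosedEmbedding_of_pairwise_le_dist hε hsep).isCompact_preimage hK
  rw [hpre] at hcpt
  exact Set.infinite_univ (isCompact_iff_finite.mp hcpt)

theorem min_abs_sin_one_sub_cos_le (k θ : ℝ) :
    min |sin k| (1 - cos k) ≤ |sin (θ + k) - sin θ| + |sin θ - sin (θ - k)| := by
  set a := sin (θ + k) - sin θ
  set b := sin θ - sin (θ - k)
  have hsum : a + b = 2 * cos θ * sin k := by simp only [a, b, sin_add, sin_sub]; ring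
  have hdiff : b - a = 2 * sin θ * (1 - cos k) := by simp only [a, b, sin_add, sin_sub]; ring
  have hcos : 0 ≤ 1 - cos k := sub_nonneg.mpr (cos_le_one k)
  have hcs : 1 ≤ |cos θ| + |sin θ| := by
    nlinarith [sin_sq_add_cos_sq θ, abs_nonneg (sin θ), abs_nonneg (cos θ), sq_abs (sin θ),
      sq_abs (cos θ)]
  have h₁ : 2 * |cos θ| * |sin k| ≤ |a| + |b| := by
    simpa [hsum, abs_mul] using abs_add_le a b
  have h₂ : 2 * |sin θ| * (1 - cos k) ≤ |a| + |b| := by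
    simpa [hdiff, abs_mul, abs_of_nonneg hcos, add_comm] using abs_sub b a
  set μ := min |sin k| (1 - cos k)
  have hμ₀ : 0 ≤ μ := le_min (abs_nonneg _) hcos
  nlinarith [mul_le_mul_of_nonneg_left (min_le_left |sin k| (1 - cos k)) (abs_nonneg (cos θ)),
    mul_le_mul_of_nonneg_left (min_le_right |sin k| (1 - cos k)) (abs_nonneg (sin θ)),
    mul_le_mul_of_nonneg_left hcs hμ₀]

theorem zero_lt_min_abs_sin_one_sub_cos {k : ℝ} (hk : ∀ m : ℤ, k ≠ m * π) :
    0 < min |sin k| (1 - cos k) := by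
  have hsin : sin k ≠ 0 := fun h => by
    obtain ⟨m, hm⟩ := sin_eq_zero_iff.mp h
    exact hk m hm.symm
  have hcos : cos k ≠ 1 := fun h => hsin (by nlinarith [sin_sq_add_cos_sq k])
  exact lt_min (abs_pos.mpr hsin) (sub_pos.mpr ((cos_le_one k).lt_of_ne hcos))

theorem Function.update_add_ne_update_add {ι : Type*} [DecidableEq ι] {n : ι → ℤ} {i j : ι}
    {a b : ℤ} (ha : a ≠ 0) (hne : j ≠ i ∨ a ≠ b) :
    Function.update n j (n j + a) ≠ Function.update n i (n i + b) := by
  intro h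
  have hj := congrFun h j
  by_cases hji : j = i
  · subst hji
    simp only [Function.update_self, add_right_inj] at hj
    exact hne.resolve_left (not_not.mpr rfl) hj
  · simp only [Function.update_self, Function.update_of_ne hji, add_eq_left] at hj
    exact ha hj

section Lattice

variable {d : ℕ} (q k : ℝ)

theorem BWfun_single (b n : Fin d → ℤ) (c : ℂ) :
    BWfun d q k (Pi.single b c) n =
      ∑ i, ((Ufun d i n * WvNt d q k n - Ufun d i b * WvNt d q k b : ℝ) : ℂ) *
        ((Pi.single b c : (Fin d → ℤ) → ℂ) (Function.update n i (n i + 1)) -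
          (Pi.single b c : (Fin d → ℤ) → ℂ) (Function.update n i (n i - 1))) := by
  refine Finset.sum_congr rfl fun i _ => ?_
  simp only [Pi.single_apply]
  split_ifs with h₁ h₂ h₂ <;> (try rw [h₁]) <;> (try rw [h₂]) <;> push_cast <;> ring

theorem BWfun_single_eq_zero {b n : Fin d → ℤ} (c : ℂ)
    (h : ∀ i, Function.update n i (n i + 1) ≠ b ∧ Function.update n i (n i - 1) ≠ b) :
    BWfun d q k (Pi.single b c) n = 0 := by
  rw [BWfun_single]
  refine Finset.sum_eq_zero fun i _ => ?_
  rw [Pi.single_eq_of_ne (h i).1, Pi.single_eq_of_ne (h i).2, sub_zero, mul_zero]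

theorem BWfun_single_of_update_add_eq {b n : Fin d → ℤ} {i : Fin d} {σ : ℤ} (c : ℂ)
    (hσ : σ = 1 ∨ σ = -1) (h : Function.update n i (n i + σ) = b) :
    BWfun d q k (Pi.single b c) n =
      σ * ((Ufun d i n * WvNt d q k n - Ufun d i b * WvNt d q k b : ℝ) : ℂ) * c := by
  subst h
  have hne : ∀ j τ, τ = 1 ∨ τ = -1 → (j ≠ i ∨ τ ≠ σ) →
      (Pi.single (Function.update n i (n i + σ)) c : (Fin d → ℤ) → ℂ)
        (Function.update n j (n j + τ)) = 0 := fun j τ hτ hjτ =>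
    Pi.single_eq_of_ne (M := fun _ => ℂ) (Function.update_add_ne_update_add (by omega) hjτ) c
  rw [BWfun_single, Finset.sum_eq_single i]
  · simp only [sub_eq_add_neg (n i)]
    rcases hσ with rfl | rfl
    · rw [Pi.single_eq_same, hne i (-1) (by simp) (Or.inr (by decide))]
      push_cast
      ring
    · rw [Pi.single_eq_same, hne i 1 (by simp) (Or.inr (by decide))]
      push_cast
      ring
  · intro j _ hji
    simp only [sub_eq_add_neg (n j)]
    rw [hne j 1 (by simp) (Or.inl hji), hne j (-1) (by simp) (Or.inl hji), sub_zero, mul_zero]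
  · simp

theorem Ufun_single_self {i : Fin d} {t : ℤ} (ht : 0 < t) : Ufun d i (Pi.single i t) = 1 := by
  have hsq : ∑ j, ((Pi.single i t : Fin d → ℤ) j : ℝ) ^ 2 = (t : ℝ) ^ 2 := by
    simp [Pi.single_apply]
  rw [Ufun, if_neg (by simpa [funext_iff, Pi.single_apply] using ht.ne'), hsq,
    sqrt_sq (by exact_mod_cast ht.le), Pi.single_eq_same, div_self (by exact_mod_cast ht.ne')]

theorem WvNt_single (i : Fin d) (t : ℤ) : WvNt d q k (Pi.single i t) = q * sin (k * t) := by
  simp [WvNt, Pi.single_apply]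

theorem BWfun_single_single_sub {i : Fin d} {s σ : ℤ} (c : ℂ) (hσ : σ = 1 ∨ σ = -1)
    (hs : 0 < s) (hsσ : 0 < s - σ) :
    BWfun d q k (Pi.single (Pi.single i s : Fin d → ℤ) c) (Pi.single i (s - σ)) =
      σ * ((q * sin (k * (s - σ)) - q * sin (k * s) : ℝ) : ℂ) * c := by
  have hupd : Function.update (Pi.single i (s - σ)) i
      ((Pi.single i (s - σ) : Fin d → ℤ) i + σ) = (Pi.single i s : Fin d → ℤ) := by
    ext j
    by_cases hji : j = i <;> simp [hji]
  rw [BWfun_single_of_update_add_eq q k c hσ hupd, Ufun_single_self hsσ, Ufun_single_self hs,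
    WvNt_single, WvNt_single]
  push_cast
  ring

theorem BWfun_single_single_eq_zero {i : Fin d} {s t : ℤ} (c : ℂ) (h : 1 < |t - s|) :
    BWfun d q k (Pi.single (Pi.single i s) c) (Pi.single i t) = 0 := by
  rw [lt_abs] at h
  refine BWfun_single_eq_zero q k c fun j => ⟨fun hj => ?_, fun hj => ?_⟩ <;>
  · have := congrFun hj i
    by_cases hji : i = j
    · subst hji
      simp only [Function.update_self, Pi.single_eq_same] at this
      omega
    · simp only [Function.update_of_ne hji, Pi.single_eq_same] at this
      omega

end Lattice

theorem dist_BW_single_single_ge {d : ℕ} {q k : ℝ} {T : l2Zd d →L[ℂ] l2Zd d}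
    (hT : ∀ (u : l2Zd d) (n : Fin d → ℤ), T u n = BWfun d q k (⇑u) n) (i : Fin d) {s s' : ℤ}
    (hs : 2 ≤ s) (hss' : 3 ≤ |s - s'|) :
    |q| * min |sin k| (1 - cos k) / 2 ≤
      dist (T (lp.single 2 (Pi.single i s) 1)) (T (lp.single 2 (Pi.single i s') 1)) := by
  rw [le_abs] at hss'
  set f := T (lp.single 2 (Pi.single i s) 1) - T (lp.single 2 (Pi.single i s') 1)
  have hf : ∀ t, 1 < |t - s'| →
      f (Pi.single i t) = BWfun d q k (Pi.single (Pi.single i s) 1) (Pi.single i t) := by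
    intro t ht
    simp only [f, lp.coeFn_sub, Pi.sub_apply, hT, lp.coeFn_single,
      BWfun_single_single_eq_zero q k 1 ht, sub_zero]
  have hsub : f (Pi.single i (s - 1)) = ((q * sin (k * s - k) - q * sin (k * s) : ℝ) : ℂ) := by
    rw [hf _ (by rw [lt_abs]; omega),
      BWfun_single_single_sub q k 1 (Or.inl rfl) (by omega) (by omega)]
    push_cast
    ring_nf
  have hadd : f (Pi.single i (s + 1)) = ((q * sin (k * s) - q * sin (k * s + k) : ℝ) : ℂ) := by
    rw [← sub_neg_eq_add, hf _ (by rw [lt_abs]; omega),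
      BWfun_single_single_sub q k 1 (Or.inr rfl) (by omega) (by omega)]
    push_cast
    ring_nf
  have hnorm := lp.norm_apply_le_norm (p := (2 : ℝ≥0∞)) two_ne_zero f
  calc |q| * min |sin k| (1 - cos k) / 2
      ≤ (‖f (Pi.single i (s - 1))‖ + ‖f (Pi.single i (s + 1))‖) / 2 := by
        rw [hsub, hadd, Complex.norm_real, Complex.norm_real, Real.norm_eq_abs, Real.norm_eq_abs,
          ← mul_sub, ← mul_sub, abs_mul, abs_mul, ← mul_add]
        gcongr
        simpa [add_comm, abs_sub_comm] using min_abs_sin_one_sub_cos_le k (k * s)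
    _ ≤ ‖f‖ := by linarith [hnorm (Pi.single i (s - 1)), hnorm (Pi.single i (s + 1))]
    _ = _ := (dist_eq_norm _ _).symm

/-- The bounded operator B_W on ℓ²(ℤ^d) is NOT compact. -/
theorem BW_not_compact (d : ℕ) (hd : 1 ≤ d) (q : ℝ) (hq : q ≠ 0) (k : ℝ)
    (hk : ∀ m : ℤ, k ≠ m * Real.pi)
    (BW : l2Zd d →L[ℂ] l2Zd d)
    (hBW : ∀ (u : l2Zd d) (n : Fin d → ℤ), (BW u) n = BWfun d q k (⇑u) n) :
    ¬ IsCompactOperator (⇑BW) := by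
  intro hcomp
  let i : Fin d := ⟨0, hd⟩
  let x : ℕ → l2Zd d := fun m => lp.single 2 (Pi.single i (3 * m + 2)) 1
  have hx : Bornology.IsBounded (Set.range x) := by
    refine (Metric.isBounded_iff_subset_closedBall 0).mpr ⟨1, ?_⟩
    rintro _ ⟨m, rfl⟩
    simp [x, lp.norm_single]
  refine hcomp.not_pairwise_le_dist (T := (BW : l2Zd d →ₗ[ℂ] l2Zd d)) hx
    (div_pos (mul_pos (abs_pos.mpr hq) (zero_lt_min_abs_sin_one_sub_cos hk)) two_pos)
    fun m m' hmm' => ?_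
  exact dist_BW_single_single_ge hBW i (s := 3 * m + 2) (s' := 3 * m' + 2) (by omega)
    (by rw [le_abs]; omega)
end
end

section
/- Let k ∈ (0, 2π) with k ≠ π. Then on the interval [0,4], the function h_{k,−}(x) := 2 + (x−2)cos k − sin k·√(x(4−x)) − x has exactly one zero, located at x = 2 − 2cos(k/2), and the function h_{k,+}(x) := 2 + (x−2)cos k + sin k·√(x(4−x)) − x has exactly one zero, located at x = 2 + 2cos(k/2). -/
noncomputable section

lemma key_zero (s c : ℝ) (hs : 0 < s) (h1 : s^2 + c^2 = 1) (x : ℝ)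
    (hx0 : 0 ≤ x) (hx4 : x ≤ 4) :
    2 + (x - 2) * (2*c^2 - 1) - (2*s*c) * Real.sqrt (x * (4 - x)) - x = 0 ↔ x = 2 - 2*c := by
  set r := Real.sqrt (x * (4 - x)) with hrdef
  have hr0 : 0 ≤ r := Real.sqrt_nonneg _
  have hr2 : r ^ 2 = x * (4 - x) := Real.sq_sqrt (by nlinarith)
  constructor
  · intro h
    have h2 : s * (2 - x) - c * r = 0 := by
      have hmul : 2 * s * (s * (2 - x) - c * r) = 0 := by linear_combination h - 2*(x-2)*h1
      rcases mul_eq_zero.mp hmul with h' | h'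
      · exact absurd h' (by positivity)
      · exact h'
    have hsq : (x - 2 - 2*c) * (x - 2 + 2*c) = 0 := by
      linear_combination (s*(2-x) + c*r) * h2 + c^2 * hr2 - (x-2)^2 * h1
    rcases mul_eq_zero.mp hsq with h' | h'
    · -- x - 2 = 2c
      have hre : r = 2 * s := by
        have : (r - 2*s) * (r + 2*s) = 0 := by nlinarith [hr2, h1, h']
        rcases mul_eq_zero.mp this with h'' | h''
        · linarith
        · nlinarith
      have hc : c = 0 := by nlinarith [h2, hre, h']
      linarith
    · linarith
  · intro h
    subst h
    have hre : r = 2 * s := by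
      rw [hrdef, show (2 - 2*c) * (4 - (2 - 2*c)) = (2*s)^2 by nlinarith]
      exact Real.sqrt_sq (by linarith)
    rw [hre]; linear_combination -4*c*h1

/-- For k ∈ (0,2π), k ≠ π, on [0,4] the function
h_{k,−}(x) = 2 + (x−2)cos k − sin k·√(x(4−x)) − x has exactly one zero, at x = 2 − 2cos(k/2),
and h_{k,+}(x) = 2 + (x−2)cos k + sin k·√(x(4−x)) − x has exactly one zero, at x = 2 + 2cos(k/2). -/
theorem h_k_unique_zeros (k : ℝ) (hk0 : 0 < k) (hk2 : k < 2 * Real.pi) (hkpi : k ≠ Real.pi) :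
    (2 - 2 * Real.cos (k / 2) ∈ Set.Icc (0 : ℝ) 4 ∧
      ∀ x ∈ Set.Icc (0 : ℝ) 4,
        (2 + (x - 2) * Real.cos k - Real.sin k * Real.sqrt (x * (4 - x)) - x = 0 ↔
          x = 2 - 2 * Real.cos (k / 2))) ∧
    (2 + 2 * Real.cos (k / 2) ∈ Set.Icc (0 : ℝ) 4 ∧
      ∀ x ∈ Set.Icc (0 : ℝ) 4,
        (2 + (x - 2) * Real.cos k + Real.sin k * Real.sqrt (x * (4 - x)) - x = 0 ↔
          x = 2 + 2 * Real.cos (k / 2))) := by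
  set s := Real.sin (k / 2) with hsdef
  set c := Real.cos (k / 2) with hcdef
  have hs : 0 < s := Real.sin_pos_of_pos_of_lt_pi (by linarith) (by linarith)
  have h1 : s ^ 2 + c ^ 2 = 1 := Real.sin_sq_add_cos_sq _
  have hcos : Real.cos k = 2 * c ^ 2 - 1 := by
    rw [show k = 2 * (k / 2) by ring, Real.cos_two_mul]
  have hsin : Real.sin k = 2 * s * c := by
    rw [show k = 2 * (k / 2) by ring, Real.sin_two_mul]
  have hc1 : -1 ≤ c := Real.neg_one_le_cos _
  have hc2 : c ≤ 1 := Real.cos_le_one _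
  refine ⟨⟨⟨by linarith, by linarith⟩, ?_⟩, ⟨⟨by linarith, by linarith⟩, ?_⟩⟩
  · intro x hx
    rw [show 2 + (x - 2) * Real.cos k - Real.sin k * Real.sqrt (x * (4 - x)) - x
        = 2 + (x - 2) * (2*c^2 - 1) - (2*s*c) * Real.sqrt (x * (4 - x)) - x by
          linear_combination (x-2)*hcos - Real.sqrt (x*(4-x)) * hsin]
    exact key_zero s c hs h1 x hx.1 hx.2
  · intro x hx
    rw [show 2 + (x - 2) * Real.cos k + Real.sin k * Real.sqrt (x * (4 - x)) - x
        = 2 + (x - 2) * (2*(-c)^2 - 1) - (2*s*(-c)) * Real.sqrt (x * (4 - x)) - x by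
          linear_combination (x-2)*hcos + Real.sqrt (x*(4-x)) * hsin,
       show (2 : ℝ) + 2 * c = 2 - 2*(-c) by ring]
    exact key_zero s (-c) hs (by linear_combination h1) x hx.1 hx.2
end
end
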